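/- arXiv:math/0306337 — 3 statements merged into one kernel-verified Lean document; each statement's English description precedes it below -/
import Mathlib

section
/- With Q̃_{a,b}(X) defined as in the Q̃-polynomial formalism (extended to arbitrary pairs via Q̃_{a,b} = -Q̃_{b,a} for a ≠ b, and Q̃_{a,0} = Q̃_a), for all a ≥ b ≥ 0 one has Q̃_{a,b}(x₁,...,x_n) = Q̃_{a,b}(x₂,...,x_n) + x₁(Q̃_{a-1,b}(x₂,...,x_n) + Q̃_{a,b-1}(x₂,...,x_n)) + x₁² Q̃_{a-1,b-1}(x₂,...,x_n). -/
open MvPolynomial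

/-- The `i`-th elementary symmetric polynomial in the variables `{X j : j ∈ S}`,
i.e. `Q̃_i` on the variable set `S`. -/
noncomputable def Qt (S : Finset ℕ) (i : ℕ) : MvPolynomial ℕ ℤ :=
  ∑ t ∈ Finset.powersetCard i S, ∏ j ∈ t, X j

/-- The two-row `Q̃`-polynomial
`Q̃_{i,j} = Q̃_i Q̃_j + 2 ∑_{k=1}^{j} (-1)^k Q̃_{i+k} Q̃_{j-k}` (for `i ≥ j`). -/
noncomputable def Qtp (S : Finset ℕ) (i j : ℕ) : MvPolynomial ℕ ℤ :=
  Qt S i * Qt S j +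
    2 * ∑ k ∈ Finset.Icc 1 j, (-1 : MvPolynomial ℕ ℤ) ^ k * Qt S (i + k) * Qt S (j - k)

/-- Fuel-based Laplace (Pfaffian) recursion for `Q̃_λ` on a list of parts of even
length: `Q̃_ν = ∑_{j} (-1)^{j-1} Q̃_{ν_j,ν_r} Q̃_{ν∖{ν_j,ν_r}}`. -/
noncomputable def Qpf (S : Finset ℕ) : ℕ → List ℕ → MvPolynomial ℕ ℤ
  | 0, _ => 1
  | fuel + 1, l =>
    if l.length < 2 then 1
    else
      ∑ j ∈ Finset.range (l.length - 1),
        (-1 : MvPolynomial ℕ ℤ) ^ j * Qtp S (l.getD j 0) (l.getLast?.getD 0) *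
          Qpf S fuel (l.dropLast.eraseIdx j)

/-- `Q̃_λ` for a partition `λ` (list of parts), padding with a zero part
to make the length even. -/
noncomputable def Qlam (S : Finset ℕ) (l : List ℕ) : MvPolynomial ℕ ℤ :=
  Qpf S (l.length + 1) (if Even l.length then l else l ++ [0])

/-- `Q̃_i` with integer index, vanishing for `i < 0`. -/
noncomputable def QtZ (S : Finset ℕ) (i : ℤ) : MvPolynomial ℕ ℤ :=
  if 0 ≤ i then Qt S i.toNat else 0

/-- `Q̃_{i,j}` with integer indices (`i ≥ j`), vanishing when an index is negative. -/
noncomputable def QtpZ (S : Finset ℕ) (i j : ℤ) : MvPolynomial ℕ ℤ :=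
  QtZ S i * QtZ S j +
    2 * ∑ k ∈ Finset.Icc 1 j.toNat,
      (-1 : MvPolynomial ℕ ℤ) ^ k * QtZ S (i + k) * QtZ S (j - k)

/-!
Adjoining a variable `x` to the alphabet multiplies `∑ eᵢ tⁱ` by `1 + x t`, i.e. replaces the
sequence `e` by `e + x · e(· - 1)`. Since `Q̃_{i,j}` is a quadratic form in `e`, expanding it gives
the four terms of the recursion; in the two cross terms carrying `e (j - k - 1)` only the summand
`k = j` is lost in passing to `Q̃_{·,j-1}`, and it vanishes because `e` is zero at negative indices.
-/

theorem Multiset.esymm_cons_succ {R : Type*} [CommSemiring R] (a : R) (s : Multiset R) (n : ℕ) :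
    (a ::ₘ s).esymm (n + 1) = s.esymm (n + 1) + a * s.esymm n := by
  simp [Multiset.esymm, Multiset.sum_map_mul_left]

lemma Qt_eq_esymm (S : Finset ℕ) (i : ℕ) : Qt S i = (S.val.map X).esymm i :=
  (Finset.esymm_map_val X S i).symm

lemma Qt_insert_succ {p : ℕ} {S : Finset ℕ} (hp : p ∉ S) (j : ℕ) :
    Qt (insert p S) (j + 1) = Qt S (j + 1) + X p * Qt S j := by
  simp only [Qt_eq_esymm, Finset.insert_val_of_notMem hp, Multiset.map_cons,
    Multiset.esymm_cons_succ]

lemma QtZ_of_neg (S : Finset ℕ) {i : ℤ} (hi : i < 0) : QtZ S i = 0 :=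
  if_neg hi.not_ge

lemma QtZ_insert {p : ℕ} {S : Finset ℕ} (hp : p ∉ S) (i : ℤ) :
    QtZ (insert p S) i = QtZ S i + X p * QtZ S (i - 1) := by
  rcases lt_or_ge i 0 with hi | hi
  · simp [QtZ_of_neg _ hi, QtZ_of_neg _ (show i - 1 < 0 by omega)]
  lift i to ℕ using hi
  cases i with
  | zero => simp [QtZ, Qt]
  | succ j =>
    have hj : ((j + 1 : ℕ) : ℤ) - 1 = (j : ℤ) := by push_cast; ring
    simp only [QtZ, hj, Nat.cast_nonneg, if_true, Int.toNat_natCast, Qt_insert_succ hp]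

lemma Finset.sum_Icc_toNat_eq_sum_Icc_toNat_sub_one {M : Type*} [AddCommMonoid M]
    (f : ℕ → M) (j : ℤ) (hf : f j.toNat = 0) :
    ∑ k ∈ Finset.Icc 1 j.toNat, f k = ∑ k ∈ Finset.Icc 1 (j - 1).toNat, f k := by
  rcases le_or_gt j 0 with hj | hj
  · rw [Int.toNat_of_nonpos hj, Int.toNat_of_nonpos (by omega)]
  · obtain ⟨m, hm⟩ : ∃ m : ℕ, j.toNat = m + 1 := ⟨(j - 1).toNat, by omega⟩
    rw [hm, show (j - 1).toNat = m by omega, Finset.sum_Icc_succ_top (by omega), ← hm, hf,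
      add_zero]

section TwoRow

variable {R : Type*} [CommRing R]

def twoRowForm (e : ℤ → R) (i j : ℤ) : R :=
  e i * e j + 2 * ∑ k ∈ Finset.Icc 1 j.toNat, (-1 : R) ^ k * e (i + k) * e (j - k)

lemma QtpZ_eq_twoRowForm (S : Finset ℕ) : QtpZ S = twoRowForm (QtZ S) := rfl

theorem twoRowForm_add_mul_shift (e : ℤ → R) (he : ∀ i < 0, e i = 0) (x : R) (i j : ℤ) :
    twoRowForm (fun m => e m + x * e (m - 1)) i j =
      twoRowForm e i j + x * (twoRowForm e (i - 1) j + twoRowForm e i (j - 1))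
        + x ^ 2 * twoRowForm e (i - 1) (j - 1) := by
  have hdropLast : ∀ f : ℤ → R, ∑ k ∈ Finset.Icc 1 j.toNat, (-1 : R) ^ k * f k * e (j - k - 1) =
      ∑ k ∈ Finset.Icc 1 (j - 1).toNat, (-1 : R) ^ k * f k * e (j - 1 - k) := by
    intro f
    rw [Finset.sum_Icc_toNat_eq_sum_Icc_toNat_sub_one _ _ (by rw [he _ (by omega), mul_zero])]
    simp only [sub_right_comm j]
  have hsum : ∑ k ∈ Finset.Icc 1 j.toNat,
      (-1 : R) ^ k * (e (i + k) + x * e (i + k - 1)) * (e (j - k) + x * e (j - k - 1)) =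
      ∑ k ∈ Finset.Icc 1 j.toNat, (-1 : R) ^ k * e (i + k) * e (j - k)
        + x * ∑ k ∈ Finset.Icc 1 j.toNat, (-1 : R) ^ k * e (i - 1 + k) * e (j - k)
        + x * ∑ k ∈ Finset.Icc 1 (j - 1).toNat, (-1 : R) ^ k * e (i + k) * e (j - 1 - k)
        + x ^ 2 * ∑ k ∈ Finset.Icc 1 (j - 1).toNat,
            (-1 : R) ^ k * e (i - 1 + k) * e (j - 1 - k) := by
    rw [← hdropLast fun k => e (i + k), ← hdropLast fun k => e (i - 1 + k), Finset.mul_sum,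
      Finset.mul_sum, Finset.mul_sum, ← Finset.sum_add_distrib, ← Finset.sum_add_distrib,
      ← Finset.sum_add_distrib]
    refine Finset.sum_congr rfl fun k _ => ?_
    rw [show i + (k : ℤ) - 1 = i - 1 + k by ring]
    ring
  unfold twoRowForm
  linear_combination 2 * hsum

end TwoRow

theorem Qtp_first_variable_expansion_general (n : ℕ) (hn : 1 ≤ n) (a b : ℤ) :
    QtpZ (Finset.range n) a b
      = QtpZ (Finset.Ico 1 n) a b
        + X 0 * (QtpZ (Finset.Ico 1 n) (a - 1) b + QtpZ (Finset.Ico 1 n) a (b - 1))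
        + (X 0) ^ 2 * QtpZ (Finset.Ico 1 n) (a - 1) (b - 1) := by
  have hrange : Finset.range n = insert 0 (Finset.Ico 1 n) := by
    rw [Finset.range_eq_Ico]
    exact (Finset.insert_Ico_add_one_left_eq_Ico hn).symm
  have hQtZ : QtZ (Finset.range n) =
      fun i => QtZ (Finset.Ico 1 n) i + X 0 * QtZ (Finset.Ico 1 n) (i - 1) := by
    funext i
    rw [hrange, QtZ_insert (by simp)]
  rw [QtpZ_eq_twoRowForm, QtpZ_eq_twoRowForm, hQtZ]
  exact twoRowForm_add_mul_shift _ (fun i hi => QtZ_of_neg _ hi) _ a b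

/-- The recursion `Q̃_{a,b}(x₁,…,x_n) = Q̃_{a,b}(X') + x₁(Q̃_{a-1,b}(X') + Q̃_{a,b-1}(X'))
 + x₁² Q̃_{a-1,b-1}(X')` for `a ≥ b ≥ 0`, where `X' = (x₂,…,x_n)`.
Here `x₁ = X 0` and `X' = {X 1, …, X (n-1)}`. -/
theorem Qtp_first_variable_expansion (n : ℕ) (hn : 1 ≤ n) (a b : ℤ) (hb : 0 ≤ b) (hab : b ≤ a) :
    QtpZ (Finset.range n) a b
      = QtpZ (Finset.Ico 1 n) a b
        + X 0 * (QtpZ (Finset.Ico 1 n) (a - 1) b + QtpZ (Finset.Ico 1 n) a (b - 1))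
        + (X 0) ^ 2 * QtpZ (Finset.Ico 1 n) (a - 1) (b - 1) :=
  Qtp_first_variable_expansion_general n hn a b
end

section
/- Top-part factorization: for any partition λ with all parts ≤ n, Q̃_n(X)·Q̃_λ(X) = Q̃_{(n,λ)}(X) in ℤ[x₁,...,x_n], where (n,λ) is the partition obtained by prepending a part equal to n. -/
open MvPolynomial

/-!
Since `Q̃_{n+k} = 0` for `k ≥ 1`, the row of a part `n` in the Pfaffian array is
`Q̃_{n,j} = Q̃_n · Q̃_{j,0}`, i.e. `Q̃_n` times the column of a zero part. The definition expands
the Pfaffian along its last index; expanding it along its first index instead (valid for any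
array: the two double expansions differ by an alternating sum over ordered pairs of positions
that cancels in pairs) turns `Q̃_{(n,λ)}` into `Q̃_n` times the Pfaffian of `λ` with a zero part
appended. When `λ` has even length this array ends in two zero parts, which drop out by the same
cancellation because `Q̃_{0,0} = 1`.
-/

open Finset

theorem List.eraseIdx_eraseIdx_of_lt {α : Type*} (l : List α) {i j : ℕ} (hij : i < j) :
    (l.eraseIdx j).eraseIdx i = (l.eraseIdx i).eraseIdx (j - 1) := by
  refine List.ext_getElem? fun k => ?_
  simp only [List.getElem?_eraseIdx]
  split_ifs <;> first | rfl | (congr 1; omega)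

theorem List.getI_eraseIdx {α : Type*} [Inhabited α] (l : List α) (i k : ℕ) :
    (l.eraseIdx i).getI k = l.getI (if k < i then k else k + 1) := by
  simp only [List.getI_eq_getElem?_getD, List.getElem?_eraseIdx]
  split_ifs <;> rfl

theorem Finset.sum_offDiag_eq_zero_of_antisymm {ι M : Type*} [DecidableEq ι] [AddCommGroup M]
    (s : Finset ι) (W : ι → ι → M) (hW : ∀ i ∈ s, ∀ j ∈ s, i ≠ j → W j i = -W i j) :
    ∑ p ∈ s.offDiag, W p.1 p.2 = 0 := by
  refine sum_involution (fun p _ => p.swap) (fun p hp => ?_) (fun p hp _ => ?_)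
    (fun p hp => mem_offDiag.2 ?_) (fun _ _ => rfl) <;>
  obtain ⟨hi, hj, hij⟩ := mem_offDiag.1 hp
  · rw [Prod.fst_swap, Prod.snd_swap, hW _ hi _ hj hij, add_neg_cancel]
  · exact fun h => hij (congrArg Prod.fst h).symm
  · exact ⟨hj, hi, hij.symm⟩

theorem Finset.sum_range_sum_range_pred_eq_sum_offDiag {M : Type*} [AddCommMonoid M] (N : ℕ)
    (F : ℕ → ℕ → M) :
    ∑ j ∈ range N, ∑ k ∈ range (N - 1), F j k
      = ∑ p ∈ (range N).offDiag, F p.1 (if p.2 < p.1 then p.2 else p.2 - 1) := by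
  rw [← sum_product']
  refine sum_nbij' (fun p => (p.1, if p.2 < p.1 then p.2 else p.2 + 1))
    (fun q => (q.1, if q.2 < q.1 then q.2 else q.2 - 1)) ?_ ?_ ?_ ?_ ?_ <;>
  · rintro ⟨a, b⟩ hab
    simp only [mem_product, mem_offDiag, mem_range] at hab ⊢
    split_ifs <;> congr 1 <;> omega

section Pfaffian

variable {α R : Type*} [Inhabited α] [CommRing R]

theorem sum_sum_eraseIdx_eq_zero_of_symm (h : α → α → R) (hsymm : ∀ x y, h x y = h y x)
    (g : List α → R) (l : List α) :
    ∑ j ∈ range l.length, ∑ k ∈ range (l.length - 1),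
      (-1) ^ (j + k) * h (l.getI j) ((l.eraseIdx j).getI k) * g ((l.eraseIdx j).eraseIdx k)
      = 0 := by
  set T : ℕ → ℕ → R := fun j k =>
    (-1) ^ (j + k) * h (l.getI j) ((l.eraseIdx j).getI k) * g ((l.eraseIdx j).eraseIdx k)
  have hT : ∀ i j, i < j → T j i = -T i (j - 1) := by
    intro i j hij
    simp only [T, List.getI_eraseIdx, if_pos hij, if_neg (show ¬j - 1 < i by omega),
      Nat.sub_add_cancel (show 1 ≤ j by omega), l.eraseIdx_eraseIdx_of_lt hij, hsymm (l.getI i)]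
    obtain ⟨m, rfl⟩ : ∃ m, j = m + 1 := ⟨j - 1, by omega⟩
    rw [Nat.add_sub_cancel, add_right_comm, add_comm m, pow_succ]
    ring
  show ∑ j ∈ range l.length, ∑ k ∈ range (l.length - 1), T j k = 0
  -- Indexed by the position `i ≠ j` in `l` of the second removed entry, the summand is
  -- antisymmetric in `(j, i)`.
  rw [sum_range_sum_range_pred_eq_sum_offDiag]
  refine sum_offDiag_eq_zero_of_antisymm _ (fun j i => T j (if i < j then i else i - 1)) ?_
  intro i _ j _ hij
  rcases hij.lt_or_gt with hij | hij
  · simp only [if_pos hij, if_neg hij.not_gt, hT i j hij]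
  · simp only [if_pos hij, if_neg hij.not_gt, hT j i hij, neg_neg]

/-- The Pfaffian of the array `(A l[i] l[k])_{i<k}`, expanded along its last index; entries on or
below the diagonal are never read. On lists of odd length the expansion runs down to length `1`
and returns a junk value. -/
def listPfaffian (A : α → α → R) (l : List α) : R :=
  if l.length < 2 then 1
  else ∑ j ∈ range (l.length - 1),
    (-1) ^ j * A (l.getI j) (l.getLast?.getD default) * listPfaffian A (l.dropLast.eraseIdx j)
termination_by l.length
decreasing_by
  exact (List.length_eraseIdx_le _ _).trans_lt (by simp only [List.length_dropLast]; omega)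

variable (A : α → α → R)

theorem listPfaffian_of_length_lt_two {l : List α} (hl : l.length < 2) : listPfaffian A l = 1 := by
  rw [listPfaffian, if_pos hl]

theorem listPfaffian_append_singleton {l : List α} (hl : l ≠ []) (b : α) :
    listPfaffian A (l ++ [b]) =
      ∑ j ∈ range l.length, (-1) ^ j * A (l.getI j) b * listPfaffian A (l.eraseIdx j) := by
  have : 0 < l.length := List.length_pos_iff.2 hl
  rw [listPfaffian, if_neg (by simp; omega)]
  simp only [List.length_append, List.length_singleton, Nat.add_sub_cancel, List.getLast?_concat,
    Option.getD_some, List.dropLast_concat]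
  refine sum_congr rfl fun j hj => ?_
  rw [List.getI_append _ _ _ (mem_range.1 hj)]

theorem listPfaffian_cons {l : List α} (hl : Odd l.length) (a : α) :
    listPfaffian A (a :: l) =
      ∑ j ∈ range l.length, (-1) ^ j * A a (l.getI j) * listPfaffian A (l.eraseIdx j) := by
  obtain ⟨p, hp⟩ := hl
  induction p generalizing l with
  | zero =>
    obtain ⟨b, rfl⟩ := List.length_eq_one_iff.1 hp
    simpa using listPfaffian_append_singleton A (List.cons_ne_nil a []) b
  | succ p ih =>
    obtain ⟨l, b, rfl⟩ := (List.eq_nil_or_concat l).resolve_left (by rintro rfl; simp at hp)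
    rw [List.concat_eq_append] at hp ⊢
    have hl : l.length = 2 * p + 2 := by simp at hp; omega
    have hcancel : ∑ j ∈ range l.length,
          (-1) ^ (j + 1) * A (l.getI j) b * listPfaffian A (a :: l.eraseIdx j) =
        ∑ j ∈ range l.length, (-1) ^ j * A a (l.getI j) * listPfaffian A (l.eraseIdx j ++ [b]) := by
      rw [← sub_eq_zero, ← sum_sub_distrib, ← neg_eq_zero, ← sum_neg_distrib]
      refine Eq.trans (sum_congr rfl fun j hj => ?_) (sum_sum_eraseIdx_eq_zero_of_symm
        (fun x y => A a x * A y b + A x b * A a y) (fun x y => by ring) (listPfaffian A) l)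
      have hj : (l.eraseIdx j).length = 2 * p + 1 := by
        rw [List.length_eraseIdx_of_lt (mem_range.1 hj)]; omega
      rw [ih hj, listPfaffian_append_singleton A (List.ne_nil_of_length_pos (by omega)), hj,
        show 2 * p + 1 = l.length - 1 by omega, mul_sum, mul_sum, ← sum_sub_distrib,
        ← sum_neg_distrib]
      refine sum_congr rfl fun k _ => ?_
      ring
    rw [← List.cons_append, listPfaffian_append_singleton A (List.cons_ne_nil a l), List.length_cons,
      sum_range_succ', List.length_append, List.length_singleton, sum_range_succ]
    simp only [List.getI_cons_succ, List.getI_cons_zero, List.eraseIdx_cons_succ,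
      List.eraseIdx_cons_zero, pow_zero, one_mul, hcancel]
    rw [List.getI_append_right _ _ _ le_rfl, List.eraseIdx_append_of_length_le le_rfl, Nat.sub_self,
      (show Even l.length from ⟨p + 1, by omega⟩).neg_one_pow]
    simp only [List.getI_cons_zero, List.eraseIdx_cons_zero, List.append_nil, one_mul]
    congr 1
    refine sum_congr rfl fun j hj => ?_
    rw [List.getI_append _ _ _ (mem_range.1 hj), List.eraseIdx_append_of_lt_length (mem_range.1 hj)]

theorem listPfaffian_append_pair {l : List α} (hl : Even l.length) (z : α) :
    listPfaffian A (l ++ [z, z]) = A z z * listPfaffian A l := by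
  have hsum : ∑ j ∈ range l.length,
      (-1) ^ j * A (l.getI j) z * listPfaffian A (l.eraseIdx j ++ [z]) = 0 := by
    rcases eq_or_ne l [] with rfl | hl0
    · simp
    refine Eq.trans (sum_congr rfl fun j hj => ?_) (sum_sum_eraseIdx_eq_zero_of_symm
      (fun x y => A x z * A y z) (fun x y => mul_comm _ _) (listPfaffian A) l)
    have hlen : (l.eraseIdx j).length = l.length - 1 := List.length_eraseIdx_of_lt (mem_range.1 hj)
    have h2 : 2 ≤ l.length := by
      obtain ⟨m, hm⟩ := hl
      have := List.length_pos_iff.2 hl0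
      omega
    rw [listPfaffian_append_singleton A (List.ne_nil_of_length_pos (by omega)), hlen, mul_sum]
    refine sum_congr rfl fun k _ => ?_
    ring
  rw [show l ++ [z, z] = l ++ [z] ++ [z] by simp, listPfaffian_append_singleton A (by simp),
    List.length_append, List.length_singleton, sum_range_succ,
    List.getI_append_right _ _ _ le_rfl, List.eraseIdx_append_of_length_le le_rfl, Nat.sub_self,
    hl.neg_one_pow]
  simp only [List.getI_cons_zero, List.eraseIdx_cons_zero, List.append_nil, one_mul]
  convert zero_add _ using 2
  rw [← hsum]
  refine sum_congr rfl fun j hj => ?_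
  rw [List.getI_append _ _ _ (mem_range.1 hj), List.eraseIdx_append_of_lt_length (mem_range.1 hj)]

theorem listPfaffian_cons_eq_mul_of_row_eq {a z : α} {c : R} (hA : ∀ x, A a x = c * A x z)
    {l : List α} (hl : Odd l.length) :
    listPfaffian A (a :: l) = c * listPfaffian A (l ++ [z]) := by
  rw [listPfaffian_cons A hl, listPfaffian_append_singleton A (List.ne_nil_of_length_pos hl.pos), mul_sum]
  refine sum_congr rfl fun j _ => ?_
  rw [hA]
  ring

end Pfaffian

theorem Qt_zero (S : Finset ℕ) : Qt S 0 = 1 := by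
  simp [Qt]

theorem Qt_eq_zero_of_card_lt (S : Finset ℕ) {i : ℕ} (h : S.card < i) : Qt S i = 0 := by
  rw [Qt, powersetCard_eq_empty.2 h, sum_empty]

theorem Qtp_zero_right (S : Finset ℕ) (i : ℕ) : Qtp S i 0 = Qt S i := by
  simp [Qtp, Qt_zero]

theorem Qtp_card_left (S : Finset ℕ) (j : ℕ) : Qtp S S.card j = Qt S S.card * Qt S j := by
  rw [Qtp, sum_eq_zero, mul_zero, add_zero]
  intro k hk
  rw [Qt_eq_zero_of_card_lt S (by simp at hk; omega), mul_zero, zero_mul]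

theorem Qpf_eq_listPfaffian (S : Finset ℕ) {F : ℕ} {l : List ℕ} (h : l.length ≤ 2 * F) :
    Qpf S F l = listPfaffian (Qtp S) l := by
  induction F generalizing l with
  | zero => rw [Qpf, listPfaffian_of_length_lt_two _ (by omega)]
  | succ F ih =>
    rw [Qpf, listPfaffian]
    refine if_congr Iff.rfl rfl (sum_congr rfl fun j hj => ?_)
    have hlen : (l.dropLast.eraseIdx j).length ≤ 2 * F := by
      rw [List.length_eraseIdx_of_lt (by simpa using hj), List.length_dropLast]
      omega
    rw [ih hlen]
    rfl

theorem Qlam_eq_listPfaffian (S : Finset ℕ) (l : List ℕ) :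
    Qlam S l = listPfaffian (Qtp S) (if Even l.length then l else l ++ [0]) :=
  Qpf_eq_listPfaffian S (by split_ifs <;> grind)

theorem Qtilde_prepend_top_general (n : ℕ) (lam : List ℕ) :
    Qt (Finset.range n) n * Qlam (Finset.range n) lam
      = Qlam (Finset.range n) (n :: lam) := by
  have hrow : ∀ x, Qtp (range n) n x = Qt (range n) n * Qtp (range n) x 0 := fun x => by
    simpa [Qtp_zero_right] using Qtp_card_left (range n) x
  simp only [Qlam_eq_listPfaffian, List.length_cons, Nat.even_add_one]
  rcases Nat.even_or_odd lam.length with h | h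
  · rw [if_pos h, if_neg (not_not.2 h), List.cons_append,
      listPfaffian_cons_eq_mul_of_row_eq _ hrow (by simpa using h.add_one),
      List.append_assoc, List.singleton_append, listPfaffian_append_pair _ h,
      Qtp_zero_right, Qt_zero, one_mul]
  · rw [if_neg (Nat.not_even_iff_odd.2 h), if_pos (Nat.not_even_iff_odd.2 h),
      listPfaffian_cons_eq_mul_of_row_eq _ hrow h]

/-- Top-part factorization: for any partition `λ` with all parts `≤ n`,
`Q̃_n · Q̃_λ = Q̃_{(n,λ)}` in `ℤ[x₁,…,x_n]`. -/
theorem Qtilde_prepend_top (n : ℕ) (lam : List ℕ)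
    (hlam : List.Pairwise (· ≥ ·) lam) (hle : ∀ a ∈ lam, a ≤ n) :
    Qt (Finset.range n) n * Qlam (Finset.range n) lam
      = Qlam (Finset.range n) (n :: lam) :=
  Qtilde_prepend_top_general n lam
end

section
/- First main Pfaffian identity for symplectic Schubert polynomials: let λ be a strict partition with λ₁ ≤ n and length ℓ ≥ 3, and set r = 2⌊(ℓ+1)/2⌋. Define C'_μ(X) = ∂₀(Q̃_μ(X)) for partitions μ of positive length. Then ∑_{j=1}^{r-1} (-1)^{j-1} C'_{λ_j,λ_r}(X) · C'_{λ∖{λ_j,λ_r}}(X) = 0 in ℤ[x₁,...,x_n]. -/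
open MvPolynomial

/-- The operator `s₀`, replacing `x₁ = X 0` by `-x₁`. -/
noncomputable def s0 : MvPolynomial ℕ ℤ →+* MvPolynomial ℕ ℤ :=
  (MvPolynomial.bind₁ fun j => if j = 0 then -(X 0 : MvPolynomial ℕ ℤ) else X j).toRingHom


/-!
Write `Q̃_i = A_i + x₁ B_i` with `A_i`, `B_i` free of `x₁` and `B_{i+1} = A_i`. An alternating
telescoping sum gives `Q̃_{a,b} - s₀ Q̃_{a,b} = 2x₁ (B_a A_b - B_b A_a)`, so the matrix of the
`Q̃_{a,b}` is `G + u ∧ v` with `G = s₀ Q̃`, `u = 2x₁ B`, `v = A`. Because `u ∧ v` has rank two,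
`Pf(G + u ∧ v) = Pf G + ∑_{p<q} ± (u ∧ v)_{pq} Pf(G without rows p, q)`, and this correction is
`2x₁ C'`. After substituting, the identity becomes a sum over a row `j` and a pair `p < q` of
`(u ∧ v)_{jr} (u ∧ v)_{pq} Pf(G without rows j, p, q)`, which vanishes by the Plücker relation
`w_{xr} w_{yz} - w_{yr} w_{xz} + w_{zr} w_{xy} = 0` of the decomposable `w = u ∧ v`. The rank-two
expansion itself is proved by induction on the size, using this vanishing one size down.
-/

open Finset

namespace LaplacePfaffian

def succAbove (j i : ℕ) : ℕ := if i < j then i else i + 1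

lemma succAbove_of_lt {j i : ℕ} (h : i < j) : succAbove j i = i := if_pos h

lemma succAbove_of_le {j i : ℕ} (h : j ≤ i) : succAbove j i = i + 1 := if_neg (by omega)

lemma succAbove_succAbove {a b : ℕ} (h : a ≤ b) (x : ℕ) :
    succAbove a (succAbove b x) = succAbove (b + 1) (succAbove a x) := by
  unfold succAbove; split_ifs <;> omega

variable {R : Type*} [CommRing R]

-- The Pfaffian of `(A (f i) (f j))_{i,j < 2k}`, expanded along the last row. Only the entries
-- with `i < j` are read, so `A` need not be antisymmetric.
noncomputable def pfaffian (A : ℕ → ℕ → R) : ℕ → (ℕ → ℕ) → R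
  | 0, _ => 1
  | k + 1, f => ∑ j ∈ range (2 * k + 1),
      (-1) ^ j * A (f j) (f (2 * k + 1)) * pfaffian A k (f ∘ succAbove j)

lemma pfaffian_congr (A : ℕ → ℕ → R) :
    ∀ (k : ℕ) {f g : ℕ → ℕ}, (∀ i < 2 * k, f i = g i) → pfaffian A k f = pfaffian A k g
  | 0, _, _, _ => rfl
  | k + 1, f, g, h => by
    simp only [pfaffian]
    refine sum_congr rfl fun j hj => ?_
    rw [mem_range] at hj
    rw [h j (by omega), h (2 * k + 1) (by omega),
      pfaffian_congr A k (f := f ∘ succAbove j) (g := g ∘ succAbove j)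
        fun i _ => h _ (by unfold succAbove; split <;> omega)]

lemma map_pfaffian {S : Type*} [CommRing S] (φ : R →+* S) (A : ℕ → ℕ → R) :
    ∀ (k : ℕ) (f : ℕ → ℕ), φ (pfaffian A k f) = pfaffian (fun a b => φ (A a b)) k f
  | 0, _ => map_one φ
  | k + 1, f => by
    simp only [pfaffian, map_sum, map_mul, map_pow, map_neg, map_one, map_pfaffian φ A k]

-- The positions are sorted first, so that the result is symmetric in `x, y, z`.
def deleteThree (f : ℕ → ℕ) (x y z : ℕ) : ℕ → ℕ :=
  f ∘ succAbove (max x (max y z)) ∘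
    succAbove (x + y + z - max x (max y z) - min x (min y z)) ∘ succAbove (min x (min y z))

lemma deleteThree_swap (f : ℕ → ℕ) (x y z : ℕ) :
    deleteThree f x y z = deleteThree f y x z := by
  unfold deleteThree
  rw [max_left_comm, min_left_comm, add_comm x y]

lemma deleteThree_rotate (f : ℕ → ℕ) (x y z : ℕ) :
    deleteThree f x y z = deleteThree f z x y := by
  unfold deleteThree
  rw [show max x (max y z) = max z (max x y) by omega,
    show min x (min y z) = min z (min x y) by omega, show x + y + z = z + x + y by omega]

lemma deleteThree_of_lt (f : ℕ → ℕ) {a b c : ℕ} (hab : a < b) (hbc : b < c) :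
    deleteThree f a b c = f ∘ succAbove c ∘ succAbove b ∘ succAbove a := by
  unfold deleteThree
  rw [show max a (max b c) = c by omega, show min a (min b c) = a by omega,
    show a + b + c - c - a = b by omega]

lemma comp_succAbove_pair_eq_deleteThree (f : ℕ → ℕ) (j : ℕ) {p q : ℕ} (hpq : p < q) :
    f ∘ succAbove j ∘ succAbove q ∘ succAbove p =
      deleteThree f j (succAbove j p) (succAbove j q) := by
  rcases le_or_gt j p with hjp | hpj
  · rw [succAbove_of_le hjp, succAbove_of_le (by omega : j ≤ q),
      deleteThree_of_lt f (by omega) (by omega)]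
    funext i
    simp only [Function.comp_apply, succAbove_succAbove (by omega : j ≤ q),
      succAbove_succAbove hjp]
  rcases le_or_gt j q with hjq | hqj
  · rw [succAbove_of_lt hpj, succAbove_of_le hjq, deleteThree_swap,
      deleteThree_of_lt f hpj (by omega)]
    funext i
    simp only [Function.comp_apply, succAbove_succAbove hjq]
  · rw [succAbove_of_lt hpj, succAbove_of_lt hqj, ← deleteThree_rotate,
      deleteThree_of_lt f hpq hqj]

lemma comp_pair_succAbove_eq_deleteThree (f : ℕ → ℕ) {p q : ℕ} (hpq : p < q) (i : ℕ) :
    f ∘ succAbove q ∘ succAbove p ∘ succAbove i =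
      deleteThree f (succAbove q (succAbove p i)) p q := by
  rcases lt_or_ge i p with hip | hpi
  · rw [succAbove_of_lt hip, succAbove_of_lt (by omega : i < q), deleteThree_of_lt f hip hpq]
  rcases lt_or_ge (i + 1) q with hiq | hqi
  · rw [succAbove_of_le hpi, succAbove_of_lt hiq, deleteThree_swap,
      deleteThree_of_lt f (by omega) hiq]
    funext y
    simp only [Function.comp_apply, succAbove_succAbove hpi]
  · rw [succAbove_of_le hpi, succAbove_of_le hqi, ← deleteThree_rotate,
      deleteThree_of_lt f hpq (by omega)]
    funext y
    simp only [Function.comp_apply, succAbove_succAbove hpi, succAbove_succAbove hqi]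

def triples (s : ℕ) : Finset (ℕ × ℕ × ℕ) :=
  (range s ×ˢ range s ×ˢ range s).filter fun t =>
    t.2.1 < t.2.2 ∧ t.1 ≠ t.2.1 ∧ t.1 ≠ t.2.2

-- `(-1) ^ (x + u + v)`, negated when `u < x < v`, is the sign with which the minor without the
-- rows `x`, `u < v` appears after deleting row `x` and the pair `u, v` by Laplace expansion, in
-- either order.
noncomputable def signedTripleSum (W : ℕ → ℕ → ℕ → R) (s : ℕ) : R :=
  ∑ t ∈ triples s, (-1) ^ (t.1 + t.2.1 + t.2.2) *
    (if t.2.1 < t.1 ∧ t.1 < t.2.2 then -1 else 1) * W t.1 t.2.1 t.2.2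

lemma signedTripleSum_eq_zero (W : ℕ → ℕ → ℕ → R) (s : ℕ)
    (hW : ∀ a b c, a < b → b < c → W a b c - W b a c + W c a b = 0) :
    signedTripleSum W s = 0 := by
  -- `triples s` is three copies of the sorted triples, according to where `x` lies among `u < v`.
  let place : (ℕ × ℕ × ℕ) × ℕ → ℕ × ℕ × ℕ := fun z =>
    if z.2 = 0 then z.1
    else if z.2 = 1 then (z.1.2.1, z.1.1, z.1.2.2) else (z.1.2.2, z.1.1, z.1.2.1)
  let sort : ℕ × ℕ × ℕ → (ℕ × ℕ × ℕ) × ℕ := fun t =>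
    if t.1 < t.2.1 then (t, 0)
    else if t.1 < t.2.2 then ((t.2.1, t.1, t.2.2), 1) else ((t.2.1, t.2.2, t.1), 2)
  rw [signedTripleSum, ← sum_nbij' (s := (triples s).filter (fun t => t.1 < t.2.1) ×ˢ range 3)
    place sort ?_ ?_ ?_ ?_ fun _ _ => rfl, sum_product]
  · refine sum_eq_zero fun ⟨a, b, c⟩ habc => ?_
    simp only [triples, mem_filter, mem_product, mem_range] at habc
    simp only [sum_range_succ, range_one, sum_singleton, place, ↓reduceIte, one_ne_zero,
      OfNat.ofNat_ne_zero, OfNat.ofNat_ne_one]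
    rw [if_neg (by omega), if_pos (by omega), if_neg (by omega)]
    linear_combination (-1 : R) ^ (a + b + c) * hW a b c habc.2 habc.1.2.1
  all_goals
    intro z hz
    simp only [triples, mem_product, mem_filter, mem_range, place, sort] at hz ⊢
    split_ifs <;> simp -failIfUnchanged only [Prod.ext_iff, true_and, not_true_eq_false] at * <;>
      omega

lemma sum_succAbove_pairs_eq_signedTripleSum (W : ℕ → ℕ → ℕ → R) (s : ℕ) :
    ∑ j ∈ range s, ∑ q ∈ range (s - 1), ∑ p ∈ range q,
      (-1 : R) ^ (j + p + q) * W j (succAbove j p) (succAbove j q) = signedTripleSum W s := by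
  simp only [sum_sigma']
  refine sum_nbij' (fun x => (x.1, succAbove x.1 x.2.2, succAbove x.1 x.2.1))
    (fun t => ⟨t.1, if t.1 < t.2.2 then t.2.2 - 1 else t.2.2,
      if t.1 < t.2.1 then t.2.1 - 1 else t.2.1⟩) ?_ ?_ ?_ ?_ fun z hz => ?_
  rotate_right
  · simp only [mem_sigma, mem_range] at hz
    simp only [succAbove]
    split_ifs <;> first | omega | ring
  all_goals
    intro z hz
    simp only [triples, mem_sigma, mem_product, mem_filter, mem_range, succAbove,
      Sigma.ext_iff, heq_eq_eq, Prod.ext_iff, true_and] at hz ⊢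
    split_ifs <;> omega

lemma sum_pairs_succAbove_eq_signedTripleSum (W : ℕ → ℕ → ℕ → R) (s : ℕ) :
    ∑ q ∈ range s, ∑ p ∈ range q, ∑ i ∈ range (s - 2),
      (-1 : R) ^ (p + q + i) * W (succAbove q (succAbove p i)) p q = signedTripleSum W s := by
  simp only [sum_sigma']
  refine sum_nbij' (fun x => (succAbove x.1 (succAbove x.2.1 x.2.2), x.2.1, x.1))
    (fun t => ⟨t.2.2, t.2.1,
      if t.1 < t.2.1 then t.1 else if t.1 < t.2.2 then t.1 - 1 else t.1 - 2⟩)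
    ?_ ?_ ?_ ?_ fun z hz => ?_
  rotate_right
  · simp only [mem_sigma, mem_range] at hz
    simp only [succAbove]
    split_ifs <;> first | omega | ring
  all_goals
    intro z hz
    simp only [triples, mem_sigma, mem_product, mem_filter, mem_range, succAbove,
      Sigma.ext_iff, heq_eq_eq, Prod.ext_iff, true_and, and_true] at hz ⊢
    split_ifs <;> omega

def wedge (U V : ℕ → R) (a b : ℕ) : R := U a * V b - U b * V a

lemma wedge_pluecker (U V : ℕ → R) (w x y z : ℕ) :
    wedge U V x w * wedge U V y z - wedge U V y w * wedge U V x z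
      + wedge U V z w * wedge U V x y = 0 := by
  simp only [wedge]; ring

noncomputable def wedgeCorrection (G : ℕ → ℕ → R) (U V : ℕ → R) (m : ℕ) (f : ℕ → ℕ) :
    R :=
  ∑ q ∈ range (2 * m + 2), ∑ p ∈ range q,
    (-1) ^ (p + q + 1) * wedge U V (f p) (f q) * pfaffian G m (f ∘ succAbove q ∘ succAbove p)

lemma sum_mul_wedgeCorrection_eq_signedTripleSum (G : ℕ → ℕ → R) (U V : ℕ → R) (m : ℕ)
    (f : ℕ → ℕ) (c : ℕ → R) :
    ∑ j ∈ range (2 * (m + 1) + 1), (-1) ^ j * c j * wedgeCorrection G U V m (f ∘ succAbove j) =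
      signedTripleSum
        (fun x y z => -(c x * (wedge U V (f y) (f z) * pfaffian G m (deleteThree f x y z))))
        (2 * (m + 1) + 1) := by
  rw [← sum_succAbove_pairs_eq_signedTripleSum, show 2 * (m + 1) + 1 - 1 = 2 * m + 2 by omega]
  refine sum_congr rfl fun j _ => ?_
  rw [wedgeCorrection, mul_sum]
  refine sum_congr rfl fun q _ => ?_
  rw [mul_sum]
  refine sum_congr rfl fun p hp => ?_
  rw [Function.comp_assoc, comp_succAbove_pair_eq_deleteThree f j (mem_range.1 hp)]
  simp only [Function.comp_apply]
  ring

lemma sum_wedge_mul_wedgeCorrection (G : ℕ → ℕ → R) (U V : ℕ → R) (m : ℕ) (f : ℕ → ℕ)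
    (b : ℕ) :
    ∑ j ∈ range (2 * (m + 1) + 1),
      (-1) ^ j * wedge U V (f j) b * wedgeCorrection G U V m (f ∘ succAbove j) = 0 := by
  rw [sum_mul_wedgeCorrection_eq_signedTripleSum]
  refine signedTripleSum_eq_zero _ _ fun x y z _ _ => ?_
  rw [deleteThree_swap f y x z, ← deleteThree_rotate f x y z]
  linear_combination -pfaffian G m (deleteThree f x y z) * wedge_pluecker U V b (f x) (f y) (f z)

lemma sum_mul_wedgeCorrection (G : ℕ → ℕ → R) (U V : ℕ → R) (m : ℕ) (f : ℕ → ℕ) :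
    ∑ j ∈ range (2 * (m + 1) + 1), (-1) ^ j * G (f j) (f (2 * (m + 1) + 1)) *
        wedgeCorrection G U V m (f ∘ succAbove j) =
      ∑ q ∈ range (2 * (m + 1) + 1), ∑ p ∈ range q, (-1) ^ (p + q + 1) *
        wedge U V (f p) (f q) * pfaffian G (m + 1) (f ∘ succAbove q ∘ succAbove p) := by
  rw [sum_mul_wedgeCorrection_eq_signedTripleSum, ← sum_pairs_succAbove_eq_signedTripleSum,
    show 2 * (m + 1) + 1 - 2 = 2 * m + 1 by omega]
  refine sum_congr rfl fun q hq => sum_congr rfl fun p hp => ?_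
  rw [mem_range] at hq hp
  rw [pfaffian, mul_sum]
  refine sum_congr rfl fun i _ => ?_
  rw [Function.comp_assoc, Function.comp_assoc, comp_pair_succAbove_eq_deleteThree f hp i]
  simp only [Function.comp_apply, succAbove_of_le (by omega : p ≤ 2 * m + 1),
    succAbove_of_le (by omega : q ≤ 2 * m + 1 + 1),
    show 2 * m + 1 + 1 + 1 = 2 * (m + 1) + 1 by ring]
  ring

lemma wedgeCorrection_succ (G : ℕ → ℕ → R) (U V : ℕ → R) (m : ℕ) (f : ℕ → ℕ) :
    wedgeCorrection G U V (m + 1) f =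
      ∑ q ∈ range (2 * (m + 1) + 1), ∑ p ∈ range q, (-1) ^ (p + q + 1) *
          wedge U V (f p) (f q) * pfaffian G (m + 1) (f ∘ succAbove q ∘ succAbove p) +
        ∑ p ∈ range (2 * (m + 1) + 1), (-1) ^ p * wedge U V (f p) (f (2 * (m + 1) + 1)) *
          pfaffian G (m + 1) (f ∘ succAbove p) := by
  rw [wedgeCorrection, sum_range_succ]
  congr 1
  refine sum_congr rfl fun p hp => ?_
  rw [mem_range] at hp
  rw [pfaffian_congr G (m + 1) (g := f ∘ succAbove p) fun i hi => by
      simp only [Function.comp_apply]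
      rw [succAbove_of_lt (show succAbove p i < 2 * (m + 1) + 1 by
        unfold succAbove; split <;> omega)],
    show p + (2 * (m + 1) + 1) + 1 = p + 2 * (m + 2) by ring, pow_add, pow_mul, neg_one_sq, one_pow,
    mul_one]

theorem pfaffian_add_wedge (G : ℕ → ℕ → R) (U V : ℕ → R) (m : ℕ) (f : ℕ → ℕ) :
    pfaffian (G + wedge U V) (m + 1) f = pfaffian G (m + 1) f + wedgeCorrection G U V m f := by
  induction m generalizing f with
  | zero =>
    simp [pfaffian, wedgeCorrection, sum_range_succ]
  | succ m ih =>
    calc pfaffian (G + wedge U V) (m + 1 + 1) f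
        = ∑ j ∈ range (2 * (m + 1) + 1),
            ((-1) ^ j * G (f j) (f (2 * (m + 1) + 1)) * pfaffian G (m + 1) (f ∘ succAbove j) +
              (-1) ^ j * wedge U V (f j) (f (2 * (m + 1) + 1)) *
                pfaffian G (m + 1) (f ∘ succAbove j) +
              (-1) ^ j * wedge U V (f j) (f (2 * (m + 1) + 1)) *
                wedgeCorrection G U V m (f ∘ succAbove j) +
              (-1) ^ j * G (f j) (f (2 * (m + 1) + 1)) *
                wedgeCorrection G U V m (f ∘ succAbove j)) := by
          rw [pfaffian]
          refine sum_congr rfl fun j _ => ?_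
          rw [ih, Pi.add_apply, Pi.add_apply]
          ring
      _ = pfaffian G (m + 1 + 1) f + wedgeCorrection G U V (m + 1) f := by
          rw [sum_add_distrib, sum_add_distrib, sum_add_distrib, sum_wedge_mul_wedgeCorrection,
            sum_mul_wedgeCorrection, wedgeCorrection_succ, pfaffian]
          ring

theorem sum_wedge_mul_pfaffian_add_wedge_sub (G : ℕ → ℕ → R) (U V : ℕ → R) (k : ℕ)
    (f : ℕ → ℕ) (b : ℕ) :
    ∑ j ∈ range (2 * k + 1), (-1) ^ j * wedge U V (f j) b *
      (pfaffian (G + wedge U V) k (f ∘ succAbove j) - pfaffian G k (f ∘ succAbove j)) = 0 := by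
  cases k with
  | zero => simp [pfaffian]
  | succ m =>
    simp only [pfaffian_add_wedge, add_sub_cancel_left]
    exact sum_wedge_mul_wedgeCorrection G U V m f b

end LaplacePfaffian

open LaplacePfaffian

lemma Qt_insert_succ_s18 {a : ℕ} {T : Finset ℕ} (ha : a ∉ T) (i : ℕ) :
    Qt (insert a T) (i + 1) = Qt T (i + 1) + X a * Qt T i := by
  simp only [Qt, ← esymm_map_val, insert_val_of_notMem ha, Multiset.map_cons, Multiset.esymm,
    Multiset.powersetCard_cons, Multiset.map_add, Multiset.sum_add, Multiset.map_map,
    Function.comp_def, Multiset.prod_cons, Multiset.sum_map_mul_left]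

-- The `B_i` of `Q̃_i = A_i + x₁ B_i`.
noncomputable def QtPred (T : Finset ℕ) : ℕ → MvPolynomial ℕ ℤ
  | 0 => 0
  | i + 1 => Qt T i

lemma Qt_insert {a : ℕ} {T : Finset ℕ} (ha : a ∉ T) :
    ∀ i, Qt (insert a T) i = Qt T i + X a * QtPred T i
  | 0 => by simp [Qt, QtPred]
  | i + 1 => Qt_insert_succ_s18 ha i

lemma s0_X (j : ℕ) : s0 (X j) = if j = 0 then -X 0 else X j := bind₁_X_right _ _

lemma s0_Qt {T : Finset ℕ} (h0 : 0 ∉ T) (i : ℕ) : s0 (Qt T i) = Qt T i := by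
  simp only [Qt, map_sum, map_prod]
  refine sum_congr rfl fun t ht => prod_congr rfl fun j hj => ?_
  rw [s0_X, if_neg (ne_of_mem_of_not_mem ((mem_powersetCard.1 ht).1 hj) h0)]

lemma s0_QtPred {T : Finset ℕ} (h0 : 0 ∉ T) : ∀ i, s0 (QtPred T i) = QtPred T i
  | 0 => map_zero s0
  | i + 1 => s0_Qt h0 i

lemma s0_Qt_insert_zero {T : Finset ℕ} (h0 : 0 ∉ T) (i : ℕ) :
    s0 (Qt (insert 0 T) i) = Qt T i - X 0 * QtPred T i := by
  rw [Qt_insert h0, map_add, map_mul, s0_X, if_pos rfl, s0_Qt h0, s0_QtPred h0]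
  ring

lemma mul_add_sum_Icc_alternating_eq_zero {R : Type*} [CommRing R] (A B : ℕ → R) (hB0 : B 0 = 0)
    (hB : ∀ i, B (i + 1) = A i) (a b : ℕ) :
    A a * B b + ∑ k ∈ Icc 1 b, (-1) ^ k * (A (a + k) * B (b - k) + B (a + k) * A (b - k)) =
      0 := by
  let h k := (-1) ^ k * (A (a + k) * B (b - k))
  have hstep : ∀ k ∈ range b, (-1) ^ (1 + k) *
      (A (a + (1 + k)) * B (b - (1 + k)) + B (a + (1 + k)) * A (b - (1 + k))) =
        h (k + 1) - h k := by
    intro k hk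
    rw [mem_range] at hk
    simp only [h, add_comm 1 k, ← add_assoc a k 1, hB, pow_succ]
    rw [← hB (b - (k + 1)), show b - (k + 1) + 1 = b - k by omega]
    ring
  rw [← Ico_add_one_right_eq_Icc, sum_Ico_eq_sum_range, add_tsub_cancel_right,
    sum_congr rfl hstep, sum_range_sub]
  simp only [h, Nat.sub_self, hB0, add_zero, Nat.sub_zero]
  ring

lemma Qtp_sub_s0_Qtp {T : Finset ℕ} (h0 : 0 ∉ T) (a b : ℕ) :
    Qtp (insert 0 T) a b - s0 (Qtp (insert 0 T) a b) =
      wedge (fun i => 2 * X 0 * QtPred T i) (Qt T) a b := by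
  have key := mul_add_sum_Icc_alternating_eq_zero (Qt T) (QtPred T) rfl (fun _ => rfl) a b
  have hsum : ∑ k ∈ Icc 1 b, (-1) ^ k * Qt (insert 0 T) (a + k) * Qt (insert 0 T) (b - k) -
      ∑ k ∈ Icc 1 b, (-1) ^ k * s0 (Qt (insert 0 T) (a + k)) * s0 (Qt (insert 0 T) (b - k)) =
      2 * X 0 * ∑ k ∈ Icc 1 b, (-1) ^ k *
        (Qt T (a + k) * QtPred T (b - k) + QtPred T (a + k) * Qt T (b - k)) := by
    rw [← sum_sub_distrib, mul_sum]
    refine sum_congr rfl fun k _ => ?_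
    rw [s0_Qt_insert_zero h0, s0_Qt_insert_zero h0, Qt_insert h0, Qt_insert h0]
    ring
  simp only [Qtp, map_add, map_mul, map_sum, map_pow, map_neg, map_one, map_ofNat]
  rw [s0_Qt_insert_zero h0, s0_Qt_insert_zero h0, Qt_insert h0 a, Qt_insert h0 b, wedge]
  linear_combination 2 * hsum + 4 * X 0 * key

lemma List.getLast?_getD_eq_getD {α : Type*} (l : List α) (d : α) :
    l.getLast?.getD d = l.getD (l.length - 1) d := by
  rw [List.getLast?_eq_getElem?, List.getD_eq_getElem?_getD]

lemma getD_dropLast_eraseIdx {α : Type*} (l : List α) (d : α) (j : ℕ) {i : ℕ}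
    (hi : i + 2 < l.length) : (l.dropLast.eraseIdx j).getD i d = l.getD (succAbove j i) d := by
  simp only [List.getD_eq_getElem?_getD]
  rcases lt_or_ge i j with hij | hji
  · rw [succAbove_of_lt hij, List.getElem?_eraseIdx_of_lt hij, List.getElem?_dropLast,
      if_pos (by omega)]
  · rw [succAbove_of_le hji, List.getElem?_eraseIdx_of_ge hji, List.getElem?_dropLast,
      if_pos (by omega)]

lemma Qpf_eq_pfaffian (S : Finset ℕ) :
    ∀ (k fuel : ℕ), k ≤ fuel → ∀ l : List ℕ, l.length = 2 * k →
      Qpf S fuel l = pfaffian (Qtp S) k (l.getD · 0)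
  | 0, 0, _, _, _ => rfl
  | 0, _ + 1, _, l, hl => by rw [Qpf, if_pos (by omega)]; rfl
  | k + 1, fuel + 1, hk, l, hl => by
    rw [Qpf, if_neg (by omega), pfaffian, List.getLast?_getD_eq_getD, hl,
      show 2 * (k + 1) - 1 = 2 * k + 1 by omega]
    refine sum_congr rfl fun j hj => ?_
    have hlen : (l.dropLast.eraseIdx j).length = 2 * k := by
      rw [mem_range] at hj
      rw [List.length_eraseIdx, List.length_dropLast, hl, if_pos (by omega)]
      omega
    rw [Qpf_eq_pfaffian S k fuel (by omega) _ hlen]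
    exact congrArg _ (pfaffian_congr _ k fun i hi => getD_dropLast_eraseIdx l 0 j (by omega))

lemma Qlam_eq_pfaffian (S : Finset ℕ) {l : List ℕ} {k : ℕ} (hl : l.length = 2 * k) :
    Qlam S l = pfaffian (Qtp S) k (l.getD · 0) := by
  rw [Qlam, if_pos ⟨k, by omega⟩]
  exact Qpf_eq_pfaffian S k _ (by omega) l hl

lemma Qlam_pair (S : Finset ℕ) (a b : ℕ) : Qlam S [a, b] = Qtp S a b := by
  simp [Qlam_eq_pfaffian S (l := [a, b]) (k := 1) rfl, pfaffian]

theorem sum_pair_mul_complement_eq_zero {T : Finset ℕ} (h0 : 0 ∉ T)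
    (Cp : List ℕ → MvPolynomial ℕ ℤ)
    (hCp : ∀ mu, 2 * X 0 * Cp mu = Qlam (insert 0 T) mu - s0 (Qlam (insert 0 T) mu))
    {l : List ℕ} {k : ℕ} (hl : l.length = 2 * k + 2) :
    ∑ j ∈ range (l.length - 1),
      (-1) ^ j * Cp [l.getD j 0, l.getLast?.getD 0] * Cp (l.dropLast.eraseIdx j) = 0 := by
  set f : ℕ → ℕ := (l.getD · 0)
  set G : ℕ → ℕ → MvPolynomial ℕ ℤ := fun a b => s0 (Qtp (insert 0 T) a b)
  set U : ℕ → MvPolynomial ℕ ℤ := fun i => 2 * X 0 * QtPred T i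
  have hQtp : Qtp (insert 0 T) = G + wedge U (Qt T) :=
    funext₂ fun a b => eq_add_of_sub_eq' (Qtp_sub_s0_Qtp h0 a b)
  have hpair : ∀ j, 2 * X 0 * Cp [l.getD j 0, l.getLast?.getD 0] =
      wedge U (Qt T) (f j) (f (2 * k + 1)) := fun j => by
    rw [hCp, Qlam_pair, List.getLast?_getD_eq_getD, hl, Qtp_sub_s0_Qtp h0]
    rfl
  have hrest : ∀ j < 2 * k + 1, 2 * X 0 * Cp (l.dropLast.eraseIdx j) =
      pfaffian (G + wedge U (Qt T)) k (f ∘ succAbove j) - pfaffian G k (f ∘ succAbove j) := by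
    intro j hj
    have hlen : (l.dropLast.eraseIdx j).length = 2 * k := by
      rw [List.length_eraseIdx, List.length_dropLast, hl, if_pos (by omega)]
      omega
    have hpf : Qlam (insert 0 T) (l.dropLast.eraseIdx j) =
        pfaffian (Qtp (insert 0 T)) k (f ∘ succAbove j) := by
      rw [Qlam_eq_pfaffian _ hlen]
      exact pfaffian_congr _ k fun i hi => getD_dropLast_eraseIdx l 0 j (by omega)
    rw [hCp, hpf, map_pfaffian]
    nth_rw 1 [hQtp]
  have h2X : (2 * X 0 * (2 * X 0) : MvPolynomial ℕ ℤ) ≠ 0 :=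
    mul_self_ne_zero.2 (mul_ne_zero two_ne_zero (X_ne_zero 0))
  refine mul_left_cancel₀ h2X ?_
  rw [mul_zero, mul_sum, hl, show 2 * k + 2 - 1 = 2 * k + 1 by omega,
    ← sum_wedge_mul_pfaffian_add_wedge_sub G U (Qt T) k f (f (2 * k + 1))]
  refine sum_congr rfl fun j hj => ?_
  rw [← hpair j, ← hrest j (mem_range.1 hj)]
  ring

theorem first_pfaffian_identity_general (n : ℕ) (lam : List ℕ)
    (hpos : ∀ a ∈ lam, 0 < a)
    (hle : ∀ a ∈ lam, a ≤ n) (hlen : 3 ≤ lam.length)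
    (Cp : List ℕ → MvPolynomial ℕ ℤ)
    (hCp : ∀ mu, 2 * X 0 * Cp mu
      = Qlam (Finset.range n) mu - s0 (Qlam (Finset.range n) mu)) :
    (let l := if Even lam.length then lam else lam ++ [0]
     ∑ j ∈ Finset.range (l.length - 1),
       (-1 : MvPolynomial ℕ ℤ) ^ j * Cp [l.getD j 0, l.getLast?.getD 0] *
         Cp (l.dropLast.eraseIdx j)) = 0 := by
  obtain ⟨a, ha⟩ := List.exists_mem_of_length_pos (by omega : 0 < lam.length)
  rw [← insert_erase (mem_range.2 ((hpos a ha).trans_le (hle a ha)))] at hCp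
  obtain ⟨k, hk⟩ : ∃ k, (if Even lam.length then lam else lam ++ [0]).length = 2 * k + 2 := by
    split_ifs with h
    · obtain ⟨c, hc⟩ := h
      exact ⟨c - 1, by omega⟩
    · obtain ⟨c, hc⟩ := Nat.not_even_iff_odd.1 h
      exact ⟨c, by rw [List.length_append, hc]; rfl⟩
  exact sum_pair_mul_complement_eq_zero (notMem_erase 0 _) Cp hCp hk

/-- First main Pfaffian identity for symplectic Schubert polynomials:
for a strict partition `λ` with `λ₁ ≤ n` and `ℓ(λ) ≥ 3` (padded with a zero
part to even length `r`), with `C'_μ = ∂₀(Q̃_μ)` (encoded by the quotient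
family `Cp`, where `∂₀(f) = (f - s₀f)/(2x₁)`),
`∑_{j=1}^{r-1} (-1)^{j-1} C'_{λ_j,λ_r} · C'_{λ∖{λ_j,λ_r}} = 0`. -/
theorem first_pfaffian_identity (n : ℕ) (lam : List ℕ)
    (hsort : List.Pairwise (· > ·) lam) (hpos : ∀ a ∈ lam, 0 < a)
    (hle : ∀ a ∈ lam, a ≤ n) (hlen : 3 ≤ lam.length)
    (Cp : List ℕ → MvPolynomial ℕ ℤ)
    (hCp : ∀ mu, 2 * X 0 * Cp mu
      = Qlam (Finset.range n) mu - s0 (Qlam (Finset.range n) mu)) :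
    (let l := if Even lam.length then lam else lam ++ [0]
     ∑ j ∈ Finset.range (l.length - 1),
       (-1 : MvPolynomial ℕ ℤ) ^ j * Cp [l.getD j 0, l.getLast?.getD 0] *
         Cp (l.dropLast.eraseIdx j)) = 0 :=
  first_pfaffian_identity_general n lam hpos hle hlen Cp hCp
end
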